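/- arXiv:1503.00108 — 4 statements merged into one kernel-verified Lean document; each statement's English description precedes it below -/
import Mathlib

section
/- Let P₁, P₂, …, P_n be prime ideals of R and t₁, …, t_n positive integers such that for every 1 ≤ i ≤ n the power Pᵢ^{tᵢ} is a Pᵢ-primary ideal of R. Then P₁^{t₁} ∩ P₂^{t₂} ∩ ⋯ ∩ P_n^{t_n} and the product P₁^{t₁}P₂^{t₂}⋯P_n^{t_n} are n-absorbing primary ideals of R. In particular, P₁ ∩ P₂ ∩ ⋯ ∩ P_n and P₁P₂⋯P_n are n-absorbing primary ideals of R. -/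
/-- A proper ideal `I` is `n`-absorbing primary: whenever `a₁ ⋯ a_{n+1} ∈ I`,
either `a₁ ⋯ a_n ∈ I` or the product of `a_{n+1}` with `n - 1` of
`a₁, …, a_n` lies in `√I`. -/
def IsNAbsorbingPrimary {R : Type*} [CommRing R] (n : ℕ) (I : Ideal R) : Prop :=
  I ≠ ⊤ ∧ ∀ a : Fin (n + 1) → R,
    (∏ i, a i) ∈ I →
      ((∏ i : Fin n, a i.castSucc) ∈ I ∨
        ∃ i : Fin n, (∏ j ∈ Finset.univ.erase i.castSucc, a j) ∈ I.radical)

/-!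
Let `Q₁, …, Qₙ` be primary ideals with `Q₁ ⋯ Qₙ ⊆ J ⊆ Q₁ ∩ ⋯ ∩ Qₙ`, so that `√J = ⋂ₖ √Qₖ`.
If `a₁ ⋯ aₙ₊₁ ∈ J` and no product omitting some `aᵢ` (`i ≤ n`) lies in `√J`, then for each `i`
there is a `k = f i` with `∏_{j ≠ i} aⱼ ∉ √Qₖ`. Since `√Qₖ` is prime and contains the full
product, it cannot miss two different partial products, so `f` is a permutation of `{1, …, n}`.
Since `Q_{f i}` is primary, this gives `aᵢ ∈ Q_{f i}`, hence `a₁ ⋯ aₙ ∈ Q₁ ⋯ Qₙ ⊆ J`.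
-/

namespace Ideal

variable {R : Type*} [CommSemiring R]

theorem iInf_radical_le_radical_prod {ι : Type*} [Fintype ι] (I : ι → Ideal R) :
    ⨅ i, (I i).radical ≤ (∏ i, I i).radical := by
  intro x hx
  choose m hm using Submodule.mem_iInf _ |>.mp hx
  exact ⟨∑ i, m i, by
    rw [← Finset.prod_pow_eq_pow_sum]
    exact prod_mem_prod fun i _ => hm i⟩

theorem radical_eq_iInf_radical_of_prod_le_of_le_iInf {ι : Type*} [Fintype ι]
    {Q : ι → Ideal R} {J : Ideal R} (hprod : ∏ i, Q i ≤ J) (hinf : J ≤ ⨅ i, Q i) :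
    J.radical = ⨅ i, (Q i).radical :=
  le_antisymm ((radical_mono hinf).trans (radical_iInf_le Q))
    ((iInf_radical_le_radical_prod Q).trans (radical_mono hprod))

theorem prod_le_iInf {ι : Type*} [Fintype ι] (Q : ι → Ideal R) : ∏ i, Q i ≤ ⨅ i, Q i :=
  prod_le_inf.trans (Finset.inf_univ_eq_iInf Q).le

variable {ι : Type*} [DecidableEq ι]

theorem prod_erase_mem_of_mem {I : Ideal R} {s : Finset ι} {a : ι → R} {i j : ι}
    (hj : j ∈ s) (hji : j ≠ i) (ha : a j ∈ I) : ∏ k ∈ s.erase i, a k ∈ I :=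
  mem_of_dvd _ (Finset.dvd_prod_of_mem a (Finset.mem_erase.mpr ⟨hji, hj⟩)) ha

theorem IsPrime.prod_erase_mem_or_prod_erase_mem {P : Ideal R} (hP : P.IsPrime)
    {s : Finset ι} {a : ι → R} (hprod : ∏ k ∈ s, a k ∈ P) {i i' : ι} (hii' : i ≠ i') :
    ∏ k ∈ s.erase i, a k ∈ P ∨ ∏ k ∈ s.erase i', a k ∈ P := by
  obtain ⟨j, hj, haj⟩ := hP.prod_mem_iff.mp hprod
  by_cases hji : j = i
  · exact .inr (prod_erase_mem_of_mem hj (hji ▸ hii') haj)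
  · exact .inl (prod_erase_mem_of_mem hj hji haj)

theorem IsPrimary.mem_of_prod_mem_of_prod_erase_notMem {Q : Ideal R} (hQ : Q.IsPrimary)
    {s : Finset ι} {a : ι → R} {j : ι} (hj : j ∈ s) (hprod : ∏ k ∈ s, a k ∈ Q)
    (herase : ∏ k ∈ s.erase j, a k ∉ Q.radical) : a j ∈ Q := by
  rw [← Finset.mul_prod_erase s a hj] at hprod
  exact ((isPrimary_iff.mp hQ).2 hprod).resolve_right herase

end Ideal

theorem isNAbsorbingPrimary_of_prod_le_of_le_iInf {R : Type*} [CommRing R] {n : ℕ} (hn : 0 < n)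
    {Q : Fin n → Ideal R} (hQ : ∀ k, (Q k).IsPrimary) {J : Ideal R}
    (hprod : ∏ k, Q k ≤ J) (hinf : J ≤ ⨅ k, Q k) : IsNAbsorbingPrimary n J := by
  have hJQ : ∀ k, J ≤ Q k := fun k => hinf.trans (iInf_le Q k)
  refine ⟨fun hJ => (hQ ⟨0, hn⟩).ne_top (top_le_iff.mp (hJ ▸ hJQ _)), fun a ha => ?_⟩
  refine or_iff_not_imp_right.mpr fun hnot => ?_
  simp only [not_exists, Ideal.radical_eq_iInf_radical_of_prod_le_of_le_iInf hprod hinf,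
    Submodule.mem_iInf, not_forall] at hnot
  choose f hf using hnot
  have hf_inj : f.Injective := fun i i' hii' => by
    by_contra hne
    rcases (Ideal.isPrime_radical (hQ (f i))).prod_erase_mem_or_prod_erase_mem
        (Ideal.le_radical (hJQ _ ha)) ((Fin.castSucc_injective n).ne hne) with h | h
    · exact hf i h
    · exact hf i' (hii' ▸ h)
  have hmem : ∀ i, a i.castSucc ∈ Q (f i) := fun i =>
    (hQ (f i)).mem_of_prod_mem_of_prod_erase_notMem (Finset.mem_univ _) (hJQ _ ha) (hf i)
  apply hprod
  rw [← (Equiv.ofBijective f hf_inj.bijective_of_finite).prod_comp Q]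
  exact Ideal.prod_mem_prod fun i _ => hmem i

theorem stmt_3_general {R : Type*} [CommRing R] (n : ℕ) (hn : 0 < n)
    (P : Fin n → Ideal R) (hP : ∀ i, (P i).IsPrime)
    (t : Fin n → ℕ)
    (hprimary : ∀ i, (P i ^ t i).IsPrimary ∧ (P i ^ t i).radical = P i) :
    IsNAbsorbingPrimary n (⨅ i, P i ^ t i) ∧
      IsNAbsorbingPrimary n (∏ i, P i ^ t i) ∧
      IsNAbsorbingPrimary n (⨅ i, P i) ∧
      IsNAbsorbingPrimary n (∏ i, P i) := by
  have hpow : ∀ i, (P i ^ t i).IsPrimary := fun i => (hprimary i).1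
  have hprime : ∀ i, (P i).IsPrimary := fun i => (hP i).isPrimary
  exact ⟨isNAbsorbingPrimary_of_prod_le_of_le_iInf hn hpow (Ideal.prod_le_iInf _) le_rfl,
    isNAbsorbingPrimary_of_prod_le_of_le_iInf hn hpow le_rfl (Ideal.prod_le_iInf _),
    isNAbsorbingPrimary_of_prod_le_of_le_iInf hn hprime (Ideal.prod_le_iInf _) le_rfl,
    isNAbsorbingPrimary_of_prod_le_of_le_iInf hn hprime le_rfl (Ideal.prod_le_iInf _)⟩

/-- Corollary 2.9: if `P₁, …, Pₙ` are prime ideals and `Pᵢ^{tᵢ}` is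
`Pᵢ`-primary for each `i`, then `P₁^{t₁} ∩ ⋯ ∩ Pₙ^{tₙ}` and
`P₁^{t₁} ⋯ Pₙ^{tₙ}` are `n`-absorbing primary; in particular so are
`P₁ ∩ ⋯ ∩ Pₙ` and `P₁ ⋯ Pₙ`. -/
theorem stmt_3 {R : Type*} [CommRing R] [Nontrivial R] (n : ℕ) (hn : 0 < n)
    (P : Fin n → Ideal R) (hP : ∀ i, (P i).IsPrime)
    (t : Fin n → ℕ) (ht : ∀ i, 0 < t i)
    (hprimary : ∀ i, (P i ^ t i).IsPrimary ∧ (P i ^ t i).radical = P i) :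
    IsNAbsorbingPrimary n (⨅ i, P i ^ t i) ∧
      IsNAbsorbingPrimary n (∏ i, P i ^ t i) ∧
      IsNAbsorbingPrimary n (⨅ i, P i) ∧
      IsNAbsorbingPrimary n (∏ i, P i) :=
  stmt_3_general n hn P hP t hprimary
end

section
/- Let I be a weakly n-absorbing primary ideal of R that is not an n-absorbing primary ideal of R. Then I^{n+1} = {0} and √I = Nil(R), the nilradical of R. -/
/-!
Let `a` be a tuple witnessing that `I` is not `n`-absorbing primary. Adding elements `x j ∈ I`
to the entries `a j`, `j ∈ V`, changes neither `∏ a ∈ I` nor the failure of the absorbing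
conditions (both only depend on `a` modulo `I`), so the weak hypothesis forces the perturbed
product to vanish. Expanding it and inducting on `V` gives
`(∏_{j ∉ V} a j) * ∏_{j ∈ V} x j = 0`.
For `V = univ` every product of `n + 1` elements of `I` vanishes, i.e. `I ^ (n + 1) = 0`, and
then `√I = √(I ^ (n + 1)) = √0`.
-/

/-- A proper ideal `I` is weakly `n`-absorbing primary. -/
def IsWeaklyNAbsorbingPrimary {R : Type*} [CommRing R] (n : ℕ) (I : Ideal R) : Prop :=
  I ≠ ⊤ ∧ ∀ a : Fin (n + 1) → R,
    (∏ i, a i) ≠ 0 → (∏ i, a i) ∈ I →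
      ((∏ i : Fin n, a i.castSucc) ∈ I ∨
        ∃ i : Fin n, (∏ j ∈ Finset.univ.erase i.castSucc, a j) ∈ I.radical)

open Finset

theorem Ideal.pow_eq_bot_of_forall_prod_eq_zero {R : Type*} [CommSemiring R] {I : Ideal R} {m : ℕ}
    (h : ∀ x : Fin m → R, (∀ j, x j ∈ I) → ∏ j, x j = 0) : I ^ m = ⊥ := by
  rw [eq_bot_iff, Submodule.pow_eq_span_pow_set, Submodule.span_le]
  intro y hy
  obtain ⟨x, rfl⟩ := Set.mem_pow.mp hy
  rw [List.prod_ofFn]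
  exact h _ fun j => (x j).2

section

variable {R : Type*} [CommRing R] {n : ℕ} {I : Ideal R}

theorem Ideal.prod_sub_prod_mem {ι : Type*} (s : Finset ι) {a b : ι → R}
    (h : ∀ j, b j - a j ∈ I) : ∏ j ∈ s, b j - ∏ j ∈ s, a j ∈ I := by
  rw [← Ideal.Quotient.eq, map_prod, map_prod]
  exact prod_congr rfl fun j _ => Ideal.Quotient.eq.mpr (h j)

def IsNAbsorbingPrimaryCounterexample (n : ℕ) (I : Ideal R) (a : Fin (n + 1) → R) : Prop :=
  (∏ i, a i) ∈ I ∧ (∏ i : Fin n, a i.castSucc) ∉ I ∧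
    ∀ i : Fin n, (∏ j ∈ univ.erase i.castSucc, a j) ∉ I.radical

theorem exists_isNAbsorbingPrimaryCounterexample (hI : I ≠ ⊤) (h : ¬ IsNAbsorbingPrimary n I) :
    ∃ a, IsNAbsorbingPrimaryCounterexample n I a := by
  simpa [IsNAbsorbingPrimary, IsNAbsorbingPrimaryCounterexample, hI] using h

theorem IsNAbsorbingPrimaryCounterexample.of_sub_mem {a b : Fin (n + 1) → R}
    (ha : IsNAbsorbingPrimaryCounterexample n I a) (h : ∀ j, b j - a j ∈ I) :
    IsNAbsorbingPrimaryCounterexample n I b := by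
  obtain ⟨hmem, hfirst, herase⟩ := ha
  refine ⟨?_, fun hb => hfirst ?_, fun i hb => herase i ?_⟩
  · simpa using I.add_mem (Ideal.prod_sub_prod_mem univ h) hmem
  · simpa using
      I.sub_mem hb (Ideal.prod_sub_prod_mem (univ : Finset (Fin n)) fun j => h j.castSucc)
  · simpa using
      I.radical.sub_mem hb (I.le_radical (Ideal.prod_sub_prod_mem (univ.erase i.castSucc) h))

theorem IsWeaklyNAbsorbingPrimary.prod_eq_zero (hI : IsWeaklyNAbsorbingPrimary n I)
    {a : Fin (n + 1) → R} (ha : IsNAbsorbingPrimaryCounterexample n I a) : ∏ j, a j = 0 := by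
  obtain ⟨hmem, hfirst, herase⟩ := ha
  by_contra hne
  rcases hI.2 a hne hmem with h | ⟨i, h⟩
  exacts [hfirst h, herase i h]

theorem IsWeaklyNAbsorbingPrimary.prod_compl_mul_prod_eq_zero (hI : IsWeaklyNAbsorbingPrimary n I)
    {a : Fin (n + 1) → R} (ha : IsNAbsorbingPrimaryCounterexample n I a)
    {x : Fin (n + 1) → R} (hx : ∀ j, x j ∈ I) (V : Finset (Fin (n + 1))) :
    (∏ j ∈ Vᶜ, a j) * ∏ j ∈ V, x j = 0 := by
  classical
  induction V using Finset.strongInduction with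
  | H V ih =>
  have hsub : ∀ j, V.piecewise (x + a) a j - a j ∈ I := by
    intro j
    by_cases hj : j ∈ V <;> simp [hj, hx j]
  have expand : ∏ j, V.piecewise (x + a) a j =
      ∑ W ∈ V.powerset, (∏ j ∈ Wᶜ, a j) * ∏ j ∈ W, x j := by
    rw [prod_piecewise, univ_inter, ← compl_eq_univ_sdiff]
    simp only [Pi.add_apply]
    rw [prod_add, sum_mul]
    refine sum_congr rfl fun W hW => ?_
    rw [← prod_sdiff (compl_subset_compl.mpr (mem_powerset.mp hW)), compl_sdiff_compl]
    ring
  have hzero := hI.prod_eq_zero (ha.of_sub_mem hsub)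
  rwa [expand, ← add_sum_erase _ _ (mem_powerset_self V), sum_eq_zero, add_zero] at hzero
  intro W hW
  obtain ⟨hne, hW⟩ := mem_erase.mp hW
  exact ih W (ssubset_of_subset_of_ne (mem_powerset.mp hW) hne)

end

theorem stmt_14_general {R : Type*} [CommRing R] (n : ℕ)
    (I : Ideal R) (hI : IsWeaklyNAbsorbingPrimary n I)
    (hnot : ¬ IsNAbsorbingPrimary n I) :
    I ^ (n + 1) = ⊥ ∧ I.radical = nilradical R := by
  obtain ⟨a, ha⟩ := exists_isNAbsorbingPrimaryCounterexample hI.1 hnot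
  have hpow : I ^ (n + 1) = ⊥ := Ideal.pow_eq_bot_of_forall_prod_eq_zero fun x hx => by
    simpa using hI.prod_compl_mul_prod_eq_zero ha hx univ
  refine ⟨hpow, ?_⟩
  rw [← Ideal.radical_pow I n.succ_ne_zero, hpow]
  rfl

/-- Corollary 2.32(1): if `I` is weakly `n`-absorbing primary but not
`n`-absorbing primary, then `I^{n+1} = 0` and `√I = Nil(R)`. -/
theorem stmt_14 {R : Type*} [CommRing R] [Nontrivial R] (n : ℕ) (hn : 0 < n)
    (I : Ideal R) (hI : IsWeaklyNAbsorbingPrimary n I)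
    (hnot : ¬ IsNAbsorbingPrimary n I) :
    I ^ (n + 1) = ⊥ ∧ I.radical = nilradical R :=
  stmt_14_general n I hI hnot
end

section
/- Let φ be a function from the set of ideals of R to itself with φ(J) ⊆ J^{n+2} for every ideal J (i.e. φ ≤ φ_{n+2}). If I is a φ-n-absorbing primary ideal of R, then I is an ω-n-absorbing primary ideal of R, i.e. I is φ_ω-n-absorbing primary where φ_ω(J) = ⋂_{m=1}^{∞} Jᵐ. -/
/-- A proper ideal `I` is `φ`-`n`-absorbing primary. -/
def IsPhiNAbsorbingPrimary {R : Type*} [CommRing R] (φ : Ideal R → Ideal R) (n : ℕ)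
    (I : Ideal R) : Prop :=
  I ≠ ⊤ ∧ ∀ a : Fin (n + 1) → R,
    (∏ i, a i) ∈ I → (∏ i, a i) ∉ φ I →
      ((∏ i : Fin n, a i.castSucc) ∈ I ∨
        ∃ i : Fin n, (∏ j ∈ Finset.univ.erase i.castSucc, a j) ∈ I.radical)

/-- The function `φ_ω : J ↦ ⋂_{m ≥ 1} Jᵐ`. -/
noncomputable def phiOmega {R : Type*} [CommRing R] (J : Ideal R) : Ideal R :=
  ⨅ m : ℕ, J ^ (m + 1)

/-!
Let `a` be a tuple with `∏ a ∈ I \ φ_ω(I)` for which the absorbing conclusion fails. That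
conclusion only depends on `a` modulo `I`, so every perturbation `a + g` with all `g i ∈ I`
has its product in `φ(I)`. Expanding `∏ (a i + g i)` and inducting on the set of perturbed
coordinates shows that all products of `n + 1` elements of `I` lie in `φ(I)`, hence
`I ^ (n + 1) ≤ φ(I) ≤ I ^ (n + 2)`. The powers of `I` are then stable from `n + 1` on, so
`φ_ω(I) = I ^ (n + 1)`, which contains `∏ a ∈ φ(I) ≤ I ^ (n + 2)`: a contradiction.
-/

open Finset

namespace Ideal

variable {R : Type*} [CommRing R]

theorem prod_mem_iff_of_forall_sub_mem {ι : Type*} {J : Ideal R} {s : Finset ι} {a b : ι → R}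
    (h : ∀ i ∈ s, a i - b i ∈ J) : ∏ i ∈ s, a i ∈ J ↔ ∏ i ∈ s, b i ∈ J := by
  have hmk : Quotient.mk J (∏ i ∈ s, a i) = Quotient.mk J (∏ i ∈ s, b i) := by
    simp only [map_prod]
    exact prod_congr rfl fun i hi => Quotient.eq.2 (h i hi)
  rw [← Quotient.eq_zero_iff_mem, hmk, Quotient.eq_zero_iff_mem]

theorem pow_le_of_forall_prod_mem {I K : Ideal R} {k : ℕ}
    (h : ∀ x : Fin k → R, (∀ i, x i ∈ I) → ∏ i, x i ∈ K) : I ^ k ≤ K := by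
  rw [Submodule.pow_eq_span_pow_set, Submodule.span_le]
  rintro _ hy
  obtain ⟨f, rfl⟩ := Set.mem_pow.1 hy
  rw [List.prod_ofFn]
  exact h _ fun i => (f i).2

theorem mul_prod_mem_of_forall_prod_add_mem {ι : Type*} [Fintype ι] [DecidableEq ι]
    {I K : Ideal R} {a : ι → R} (h : ∀ g : ι → R, (∀ i, g i ∈ I) → ∏ i, (a i + g i) ∈ K)
    (T : Finset ι) {x : ι → R} (hx : ∀ i, x i ∈ I) : (∏ i ∈ Tᶜ, a i) * ∏ i ∈ T, x i ∈ K := by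
  induction T using Finset.strongInduction generalizing x with
  | H T ih =>
  -- Expand `∏ (a + g)` for `g = x` on `T` and `0` off `T`: the term indexed by `Tᶜ` is the
  -- target, the others vanish or involve fewer coordinates of `x`.
  set g := T.piecewise x 0
  have hg : ∀ i, g i ∈ I := fun i => by by_cases hi : i ∈ T <;> simp [g, hi, hx i]
  have other : ∀ t ∈ univ.powerset.erase Tᶜ, (∏ i ∈ t, a i) * ∏ i ∈ univ \ t, g i ∈ K := by
    intro t ht
    rw [← compl_eq_univ_sdiff]
    by_cases hsub : tᶜ ⊆ T
    · have hlt : tᶜ ⊂ T :=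
        lt_of_le_of_ne hsub fun he => (mem_erase.1 ht).1 (by rw [← he, compl_compl])
      simpa only [compl_compl] using ih tᶜ hlt hg
    · obtain ⟨j, hjt, hjT⟩ := not_subset.1 hsub
      rw [prod_eq_zero hjt (piecewise_eq_of_notMem _ _ _ hjT), mul_zero]
      exact K.zero_mem
  have split : (∏ i ∈ Tᶜ, a i) * ∏ i ∈ T, x i =
      ∏ i, (a i + g i) - ∑ t ∈ univ.powerset.erase Tᶜ, (∏ i ∈ t, a i) * ∏ i ∈ univ \ t, g i := by
    rw [prod_add, ← add_sum_erase _ _ (mem_powerset.2 (subset_univ Tᶜ)), add_sub_cancel_right,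
      ← compl_eq_univ_sdiff, compl_compl]
    exact congrArg _ (prod_congr rfl fun i hi => (piecewise_eq_of_mem _ _ _ hi).symm)
  rw [split]
  exact K.sub_mem (h g hg) (K.sum_mem other)

theorem pow_le_phiOmega_of_pow_le_pow_succ {I : Ideal R} {k : ℕ} (h : I ^ k ≤ I ^ (k + 1)) :
    I ^ k ≤ phiOmega I := by
  have stable : ∀ d, I ^ k ≤ I ^ (k + d) := by
    intro d
    induction d with
    | zero => rfl
    | succ d ih =>
      calc I ^ k ≤ I ^ (k + 1) := h
        _ = I ^ k * I := pow_succ I k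
        _ ≤ I ^ (k + d) * I := mul_le_mul_left ih I
        _ = I ^ (k + (d + 1)) := (pow_succ I _).symm
  refine le_iInf fun m => ?_
  rcases le_or_gt (m + 1) k with hm | hm
  · exact (stable 0).trans (pow_le_pow_right hm)
  · simpa [Nat.add_sub_cancel' hm.le] using stable (m + 1 - k)

end Ideal

section AbsorbingPrimary

open Ideal

variable {R : Type*} [CommRing R]

def AbsorbsPrimary (n : ℕ) (I : Ideal R) (a : Fin (n + 1) → R) : Prop :=
  (∏ i : Fin n, a i.castSucc) ∈ I ∨
    ∃ i : Fin n, (∏ j ∈ univ.erase i.castSucc, a j) ∈ I.radical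

theorem AbsorbsPrimary.of_forall_sub_mem {n : ℕ} {I : Ideal R} {a b : Fin (n + 1) → R}
    (h : ∀ i, a i - b i ∈ I) (ha : AbsorbsPrimary n I a) : AbsorbsPrimary n I b := by
  refine ha.imp (fun hi => ?_) fun ⟨i, hi⟩ => ⟨i, ?_⟩
  · exact (prod_mem_iff_of_forall_sub_mem fun i _ => h i.castSucc).1 hi
  · exact (prod_mem_iff_of_forall_sub_mem fun j _ => le_radical (h j)).1 hi

theorem IsPhiNAbsorbingPrimary.pow_succ_le {φ : Ideal R → Ideal R} {n : ℕ} {I : Ideal R}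
    (hI : IsPhiNAbsorbingPrimary φ n I) {a : Fin (n + 1) → R} (ha : ∏ i, a i ∈ I)
    (hna : ¬AbsorbsPrimary n I a) : I ^ (n + 1) ≤ φ I := by
  have perturb : ∀ g : Fin (n + 1) → R, (∀ i, g i ∈ I) → ∏ i, (a i + g i) ∈ φ I := by
    intro g hg
    have hcong : ∀ i, (a i + g i) - a i ∈ I := fun i => by simpa using hg i
    by_contra hout
    have hmem : ∏ i, (a i + g i) ∈ I := (prod_mem_iff_of_forall_sub_mem fun i _ => hcong i).2 ha
    exact hna (AbsorbsPrimary.of_forall_sub_mem hcong (hI.2 _ hmem hout))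
  refine pow_le_of_forall_prod_mem fun x hx => ?_
  simpa using mul_prod_mem_of_forall_prod_add_mem perturb univ hx

end AbsorbingPrimary

theorem stmt_15_general {R : Type*} [CommRing R] (n : ℕ)
    (φ : Ideal R → Ideal R) (hφ : ∀ J : Ideal R, φ J ≤ J ^ (n + 2))
    (I : Ideal R) (hI : IsPhiNAbsorbingPrimary φ n I) :
    IsPhiNAbsorbingPrimary phiOmega n I := by
  refine ⟨hI.1, fun a ha hω => ?_⟩
  by_cases hφa : ∏ i, a i ∈ φ I
  · by_contra hna
    have hstable : I ^ (n + 1) ≤ phiOmega I :=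
      Ideal.pow_le_phiOmega_of_pow_le_pow_succ ((hI.pow_succ_le ha hna).trans (hφ I))
    exact hω (hstable (Ideal.pow_le_pow_right (by omega) (hφ I hφa)))
  · exact hI.2 a ha hφa

/-- Corollary 2.33: if `φ ≤ φ_{n+2}` and `I` is `φ`-`n`-absorbing primary,
then `I` is `ω`-`n`-absorbing primary. -/
theorem stmt_15 {R : Type*} [CommRing R] [Nontrivial R] (n : ℕ) (hn : 0 < n)
    (φ : Ideal R → Ideal R) (hφ : ∀ J : Ideal R, φ J ≤ J ^ (n + 2))
    (I : Ideal R) (hI : IsPhiNAbsorbingPrimary φ n I) :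
    IsPhiNAbsorbingPrimary phiOmega n I :=
  stmt_15_general n φ hφ I hI
end

section
/- Let n ≥ 2 and let φ be a function from the set of ideals of R to itself with φ(J) ⊆ J for every ideal J. Suppose I is a φ-(n−1)-absorbing primary ideal of R that is not an (n−1)-absorbing primary ideal, and J is an ideal of R with J ⊆ I and φ(I) ⊆ φ(J). Then J is a φ-n-absorbing primary ideal of R. -/
/-!
If `a` witnesses that `I` is not `(n-1)`-absorbing primary, then so does `a + g` for every tuple
`g` with entries in `I`, so the `φ`-condition forces `∏ (aᵢ + gᵢ) ∈ φ(I)`. Expanding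
`xⁿ = ∏ ((aᵢ + x) - aᵢ)` then gives `xⁿ ∈ φ(I)` for every `x ∈ I`, whence `√I ⊆ √φ(J) ⊆ √J`.
Given `b₁⋯bₙ₊₁ ∈ J \ φ(J)`, merging `bₙbₙ₊₁` into one factor gives a product of `n` factors in
`I \ φ(I)`, and the alternatives the `φ`-`(n-1)`-condition of `I` yields transfer to `J` through
`√I ⊆ √J`.
-/

open Finset

theorem Finset.prod_univ_erase_eq_prod_update {ι M : Type*} [Fintype ι] [DecidableEq ι]
    [CommMonoid M] (f : ι → M) (x : ι) :
    ∏ j ∈ univ.erase x, f j = ∏ j, Function.update f x 1 j := by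
  rw [prod_update_of_mem (mem_univ x), one_mul, sdiff_singleton_eq_erase]

theorem Fin.prod_univ_erase_last {M : Type*} [CommMonoid M] {n : ℕ} (f : Fin (n + 1) → M) :
    ∏ j ∈ univ.erase (Fin.last n), f j = ∏ j : Fin n, f j.castSucc := by
  rw [prod_univ_erase_eq_prod_update, Fin.prod_univ_castSucc, Function.update_self, mul_one]
  exact prod_congr rfl fun j _ => Function.update_of_ne (Fin.castSucc_lt_last j).ne _ _

theorem Fin.prod_univ_erase_castSucc {M : Type*} [CommMonoid M] {n : ℕ} (f : Fin (n + 1) → M)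
    (i : Fin n) :
    ∏ j ∈ univ.erase i.castSucc, f j = (∏ j ∈ univ.erase i, f j.castSucc) * f (Fin.last n) := by
  rw [prod_univ_erase_eq_prod_update, prod_univ_erase_eq_prod_update, Fin.prod_univ_castSucc,
    Function.update_of_ne (Fin.castSucc_lt_last i).ne']
  congr 1
  exact prod_congr rfl fun j _ =>
    Function.update_apply_of_injective f (Fin.castSucc_injective n) i 1 j

section

variable {R : Type*} [CommRing R]

theorem Ideal.prod_add_mem_iff {ι : Type*} (K : Ideal R) (s : Finset ι) {a g : ι → R}
    (hg : ∀ i, g i ∈ K) : ∏ i ∈ s, (a i + g i) ∈ K ↔ ∏ i ∈ s, a i ∈ K := by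
  simp only [← Ideal.Quotient.eq_zero_iff_mem, map_prod, map_add,
    Ideal.Quotient.eq_zero_iff_mem.2 (hg _), add_zero]

theorem pow_card_mem_of_forall_prod_add_ite_mem {ι : Type*} [Fintype ι] [DecidableEq ι]
    (K : Ideal R) (a : ι → R) (x : R)
    (h : ∀ s : Finset ι, ∏ i, (a i + if i ∈ s then x else 0) ∈ K) :
    x ^ Fintype.card ι ∈ K := by
  have hexpand : x ^ Fintype.card ι
      = ∑ s ∈ univ.powerset, (∏ i ∈ s, (a i + x)) * ∏ i ∈ univ \ s, -a i := by
    rw [← prod_add]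
    simp
  rw [hexpand]
  refine sum_mem fun s _ => ?_
  have hsign : (∏ i ∈ s, (a i + x)) * ∏ i ∈ univ \ s, -a i
      = (∏ i, if i ∈ s then 1 else -1) * ∏ i, (a i + if i ∈ s then x else 0) := by
    rw [← prod_mul_distrib, ← prod_mul_prod_compl s, ← compl_eq_univ_sdiff]
    congr 1 <;> refine prod_congr rfl fun i hi => ?_
    · simp [hi]
    · simp [mem_compl.1 hi]
  rw [hsign]
  exact K.mul_mem_left _ (h s)

def AbsorbingPrimaryConclusion (I : Ideal R) {n : ℕ} (a : Fin (n + 1) → R) : Prop :=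
  (∏ i : Fin n, a i.castSucc) ∈ I ∨ ∃ i : Fin n, (∏ j ∈ univ.erase i.castSucc, a j) ∈ I.radical

theorem absorbingPrimaryConclusion_add_iff {I : Ideal R} {n : ℕ} {a g : Fin (n + 1) → R}
    (hg : ∀ i, g i ∈ I) :
    AbsorbingPrimaryConclusion I (a + g) ↔ AbsorbingPrimaryConclusion I a := by
  have hg' (i : Fin (n + 1)) : g i ∈ I.radical := I.le_radical (hg i)
  simp only [AbsorbingPrimaryConclusion, Pi.add_apply,
    I.prod_add_mem_iff _ fun i : Fin n => hg i.castSucc, I.radical.prod_add_mem_iff _ hg']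

theorem prod_mem_of_not_absorbingPrimaryConclusion {φ : Ideal R → Ideal R} {n : ℕ} {I : Ideal R}
    (hI : IsPhiNAbsorbingPrimary φ n I) {a : Fin (n + 1) → R} (ha : ∏ i, a i ∈ I)
    (hna : ¬AbsorbingPrimaryConclusion I a) : ∏ i, a i ∈ φ I :=
  not_not.1 fun h => hna (hI.2 a ha h)

theorem pow_mem_of_not_isNAbsorbingPrimary {φ : Ideal R → Ideal R} {n : ℕ} {I : Ideal R}
    (hI : IsPhiNAbsorbingPrimary φ n I) (hInot : ¬IsNAbsorbingPrimary n I) {x : R} (hx : x ∈ I) :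
    x ^ (n + 1) ∈ φ I := by
  classical
  obtain ⟨a, haI, hna⟩ :
      ∃ a : Fin (n + 1) → R, ∏ i, a i ∈ I ∧ ¬AbsorbingPrimaryConclusion I a := by
    by_contra! h
    exact hInot ⟨hI.1, h⟩
  rw [← Fintype.card_fin (n + 1)]
  refine pow_card_mem_of_forall_prod_add_ite_mem _ a x fun s => ?_
  set g : Fin (n + 1) → R := fun i => if i ∈ s then x else 0
  have hg (i : Fin (n + 1)) : g i ∈ I := by
    by_cases hi : i ∈ s <;> simp [g, hi, hx]
  refine prod_mem_of_not_absorbingPrimaryConclusion hI ((I.prod_add_mem_iff _ hg).2 haI) ?_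
  exact (absorbingPrimaryConclusion_add_iff hg).not.2 hna

theorem radical_le_radical_of_not_isNAbsorbingPrimary {φ : Ideal R → Ideal R} {n : ℕ}
    {I J : Ideal R} (hI : IsPhiNAbsorbingPrimary φ n I) (hInot : ¬IsNAbsorbingPrimary n I)
    (hφJ : φ J ≤ J) (hφIJ : φ I ≤ φ J) : I.radical ≤ J.radical :=
  Ideal.radical_le_radical_iff.2 fun _ hx =>
    Ideal.radical_mono (hφIJ.trans hφJ) ⟨n + 1, pow_mem_of_not_isNAbsorbingPrimary hI hInot hx⟩

theorem IsPhiNAbsorbingPrimary.succ_of_le {φ : Ideal R → Ideal R} {n : ℕ} {I J : Ideal R}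
    (hI : IsPhiNAbsorbingPrimary φ n I) (hJI : J ≤ I) (hφIJ : φ I ≤ φ J)
    (hrad : I.radical ≤ J.radical) : IsPhiNAbsorbingPrimary φ (n + 1) J := by
  refine ⟨ne_top_of_le_ne_top hI.1 hJI, fun b hbJ hbφ => Or.inr ?_⟩
  set c : Fin (n + 1) → R :=
    Fin.snoc (fun i => b i.castSucc.castSucc) (b (Fin.last n).castSucc * b (Fin.last (n + 1)))
  have hc : ∏ i, c i = ∏ i, b i := by
    simp only [c, Fin.prod_univ_castSucc, Fin.snoc_castSucc, Fin.snoc_last, mul_assoc]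
  rcases hI.2 c (hc ▸ hJI hbJ) (hc ▸ fun h => hbφ (hφIJ h)) with hfirst | ⟨i, hi⟩
  · refine ⟨Fin.last n, hrad ?_⟩
    rw [Fin.prod_univ_erase_castSucc, Fin.prod_univ_erase_last]
    simp only [c, Fin.snoc_castSucc] at hfirst
    exact Ideal.mul_mem_right _ _ (I.le_radical hfirst)
  · refine ⟨i.castSucc, hrad ?_⟩
    rw [Fin.prod_univ_erase_castSucc, Fin.prod_univ_erase_castSucc, mul_assoc]
    simpa only [c, Fin.prod_univ_erase_castSucc, Fin.snoc_castSucc, Fin.snoc_last] using hi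

end

theorem stmt_16_general {R : Type*} [CommRing R] (n : ℕ) (hn : 2 ≤ n)
    (φ : Ideal R → Ideal R) (hφ : ∀ K : Ideal R, φ K ≤ K) (I J : Ideal R)
    (hI : IsPhiNAbsorbingPrimary φ (n - 1) I)
    (hInot : ¬ IsNAbsorbingPrimary (n - 1) I)
    (hJI : J ≤ I) (hφIJ : φ I ≤ φ J) :
    IsPhiNAbsorbingPrimary φ n J := by
  obtain ⟨k, rfl⟩ : ∃ k, n = k + 1 := ⟨n - 1, by omega⟩
  exact hI.succ_of_le hJI hφIJ
    (radical_le_radical_of_not_isNAbsorbingPrimary hI hInot (hφ J) hφIJ)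

/-- Theorem 2.36: if `I` is `φ`-`(n-1)`-absorbing primary but not
`(n-1)`-absorbing primary, and `J ⊆ I` with `φ(I) ⊆ φ(J)`, then `J` is a
`φ`-`n`-absorbing primary ideal of `R`. -/
theorem stmt_16 {R : Type*} [CommRing R] [Nontrivial R] (n : ℕ) (hn : 2 ≤ n)
    (φ : Ideal R → Ideal R) (hφ : ∀ K : Ideal R, φ K ≤ K) (I J : Ideal R)
    (hI : IsPhiNAbsorbingPrimary φ (n - 1) I)
    (hInot : ¬ IsNAbsorbingPrimary (n - 1) I)
    (hJI : J ≤ I) (hφIJ : φ I ≤ φ J) :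
    IsPhiNAbsorbingPrimary φ n J :=
  stmt_16_general n hn φ hφ I J hI hInot hJI hφIJ
end
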